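/- Let F0∈ℝ and let ψ,u,v∥,ρ be smooth on {R>0}×ℝ_φ×ℝ_Z; set B := ((1/R)∂_Zψ)e_R+(F0/R)e_φ+(−(1/R)∂_Rψ)e_Z, v_pol := (−R∂_Zu)e_R+(R∂_Ru)e_Z, and |B|² := (F0²+(∂_Rψ)²+(∂_Zψ)²)/R². Then B·( ρ (v_pol·∇(v∥B)) ) = Rρ|B|²[u,v∥] + Rρv∥[u, |B|²/2]. -/

import Mathlib

noncomputable section
set_option linter.unusedVariables false

open Real

/-- Scalar fields on the cylindrical domain, as functions of `(R, φ, Z)`. -/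
abbrev F3 := ℝ → ℝ → ℝ → ℝ

/-- Partial derivative in `R`. -/
def dR (f : F3) (R φ Z : ℝ) : ℝ := deriv (fun r => f r φ Z) R

/-- Partial derivative in `φ`. -/
def dP (f : F3) (R φ Z : ℝ) : ℝ := deriv (fun a => f R a Z) φ

/-- Partial derivative in `Z`. -/
def dZ (f : F3) (R φ Z : ℝ) : ℝ := deriv (fun z => f R φ z) Z

/-- Joint smoothness (C^∞) of a scalar field. -/
def Smooth3 (f : F3) : Prop :=
  ContDiff ℝ (⊤ : ℕ∞) fun q : ℝ × ℝ × ℝ => f q.1 q.2.1 q.2.2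

/-- Poisson bracket `[a,b] = ∂_R a ∂_Z b − ∂_Z a ∂_R b`. -/
def pb (a b : F3) (R φ Z : ℝ) : ℝ :=
  dR a R φ Z * dZ b R φ Z - dZ a R φ Z * dR b R φ Z

/-- Grad–Shafranov operator `Δ* f = R ∂_R((1/R) ∂_R f) + ∂_ZZ f`. -/
def GS (f : F3) (R φ Z : ℝ) : ℝ :=
  R * dR (fun r a z => (1 / r) * dR f r a z) R φ Z + dZ (dZ f) R φ Z

/-- Poloidal Laplacian `Δ_pol f = (1/R) ∂_R(R ∂_R f) + ∂_ZZ f`. -/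
def LapPol (f : F3) (R φ Z : ℝ) : ℝ :=
  (1 / R) * dR (fun r a z => r * dR f r a z) R φ Z + dZ (dZ f) R φ Z

/-- Cylindrical divergence `∇·F = (1/R)∂_R(R F_R) + (1/R)∂_φ F_φ + ∂_Z F_Z`. -/
def divC (FR Fφ FZ : F3) (R φ Z : ℝ) : ℝ :=
  (1 / R) * dR (fun r a z => r * FR r a z) R φ Z + (1 / R) * dP Fφ R φ Z + dZ FZ R φ Z

/-- Scalar advection `X·∇f = X_R ∂_R f + (X_φ/R) ∂_φ f + X_Z ∂_Z f`. -/
def advS (XvR XvP XvZ f : F3) (R φ Z : ℝ) : ℝ :=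
  XvR R φ Z * dR f R φ Z + XvP R φ Z / R * dP f R φ Z + XvZ R φ Z * dZ f R φ Z

/-- `e_R`-component of the vector advection `X·∇Y`. -/
def advVR (XvR XvP XvZ YvR YvP YvZ : F3) (R φ Z : ℝ) : ℝ :=
  advS XvR XvP XvZ YvR R φ Z - XvP R φ Z * YvP R φ Z / R

/-- `e_φ`-component of the vector advection `X·∇Y`. -/
def advVP (XvR XvP XvZ YvR YvP YvZ : F3) (R φ Z : ℝ) : ℝ :=
  advS XvR XvP XvZ YvP R φ Z + XvP R φ Z * YvR R φ Z / R

/-- `e_Z`-component of the vector advection `X·∇Y`. -/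
def advVZ (XvR XvP XvZ YvR YvP YvZ : F3) (R φ Z : ℝ) : ℝ :=
  advS XvR XvP XvZ YvZ R φ Z

/-- `e_R`-component of `B = (1/R)∇ψ×e_φ + (F0/R)e_φ`. -/
def BR (ψ : F3) : F3 := fun R φ Z => (1 / R) * dZ ψ R φ Z

/-- `e_φ`-component of the magnetic field. -/
def BP (F0 : ℝ) : F3 := fun R _ _ => F0 / R

/-- `e_Z`-component of the magnetic field. -/
def BZ (ψ : F3) : F3 := fun R φ Z => -(1 / R) * dR ψ R φ Z

/-- `e_R`-component of `v_pol = −R∇u×e_φ`. -/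
def vR (u : F3) : F3 := fun R φ Z => -R * dZ u R φ Z

/-- `e_Z`-component of `v_pol = −R∇u×e_φ`. -/
def vZ (u : F3) : F3 := fun R φ Z => R * dR u R φ Z

/-- The zero field. -/
def zeroF : F3 := fun _ _ _ => 0

/-- `|B|² = (F0² + (∂_Rψ)² + (∂_Zψ)²)/R²`. -/
def B2 (F0 : ℝ) (ψ : F3) : F3 := fun R φ Z =>
  (F0 ^ 2 + (dR ψ R φ Z) ^ 2 + (dZ ψ R φ Z) ^ 2) / R ^ 2

/-- `|B_pol|² = ((∂_Rψ)² + (∂_Zψ)²)/R²`. -/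
def Bpol2 (ψ : F3) : F3 := fun R φ Z => ((dR ψ R φ Z) ^ 2 + (dZ ψ R φ Z) ^ 2) / R ^ 2

/-- `ρ̂ = R²ρ`. -/
def rh (ρ : F3) : F3 := fun R φ Z => R ^ 2 * ρ R φ Z

/-- `∇_pol a · ∇_pol b`. -/
def gdot (a b : F3) : F3 := fun R φ Z =>
  dR a R φ Z * dR b R φ Z + dZ a R φ Z * dZ b R φ Z

/-- `e_R`-component of `v∥ B`. -/
def XR (ψ vpar : F3) : F3 := fun R φ Z => vpar R φ Z * BR ψ R φ Z

/-- `e_φ`-component of `v∥ B`. -/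
def XP (F0 : ℝ) (vpar : F3) : F3 := fun R φ Z => vpar R φ Z * BP F0 R φ Z

/-- `e_Z`-component of `v∥ B`. -/
def XZ (ψ vpar : F3) : F3 := fun R φ Z => vpar R φ Z * BZ ψ R φ Z

/-! The poloidal flow `v_pol = −R ∇u × e_φ` acts on scalars as `R [u, ·]`, and the Poisson bracket
`[u, ·]` is a derivation. Since `v_pol` has no toroidal component, the connection terms of the
cylindrical advection drop out, so `B · (v_pol·∇(v∥ B)) = R (|B|² [u, v∥] + v∥ Σ Bᵢ [u, Bᵢ])`
and `Σ Bᵢ [u, Bᵢ] = [u, |B|²/2]`. -/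

def PolDifferentiableAt (f : F3) (R φ Z : ℝ) : Prop :=
  DifferentiableAt ℝ (fun r => f r φ Z) R ∧ DifferentiableAt ℝ (fun z => f R φ z) Z

theorem deriv_half_sq_add_sq_add_sq {a b c : ℝ → ℝ} {x : ℝ} (ha : DifferentiableAt ℝ a x)
    (hb : DifferentiableAt ℝ b x) (hc : DifferentiableAt ℝ c x) :
    deriv (fun t => (a t ^ 2 + b t ^ 2 + c t ^ 2) / 2) x
      = a x * deriv a x + b x * deriv b x + c x * deriv c x := by
  refine ((((ha.hasDerivAt.pow 2).add (hb.hasDerivAt.pow 2)).add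
    (hc.hasDerivAt.pow 2)).div_const 2).deriv.trans ?_
  norm_num
  ring

section PoissonBracket

variable {u f g h : F3} {R φ Z : ℝ}

theorem pb_mul_right (hf : PolDifferentiableAt f R φ Z) (hg : PolDifferentiableAt g R φ Z) :
    pb u (fun r a z => f r a z * g r a z) R φ Z = f R φ Z * pb u g R φ Z + g R φ Z * pb u f R φ Z := by
  have hR : deriv (fun r => f r φ Z * g r φ Z) R = _ := deriv_mul hf.1 hg.1
  have hZ : deriv (fun z => f R φ z * g R φ z) Z = _ := deriv_mul hf.2 hg.2
  simp only [pb, dR, dZ, hR, hZ]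
  ring

theorem pb_half_sq_add_sq_add_sq (hf : PolDifferentiableAt f R φ Z)
    (hg : PolDifferentiableAt g R φ Z) (hh : PolDifferentiableAt h R φ Z) :
    pb u (fun r a z => (f r a z ^ 2 + g r a z ^ 2 + h r a z ^ 2) / 2) R φ Z
      = f R φ Z * pb u f R φ Z + g R φ Z * pb u g R φ Z + h R φ Z * pb u h R φ Z := by
  simp only [pb, dR, dZ]
  rw [deriv_half_sq_add_sq_add_sq hf.1 hg.1 hh.1, deriv_half_sq_add_sq_add_sq hf.2 hg.2 hh.2]
  ring

end PoissonBracket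

theorem advS_vR_zeroF_vZ (u f : F3) (R φ Z : ℝ) :
    advS (vR u) zeroF (vZ u) f R φ Z = R * pb u f R φ Z := by
  simp only [advS, vR, vZ, zeroF, pb]
  ring

section Smooth

variable {f : F3}

theorem Smooth3.hasDerivAt_dR (hf : Smooth3 f) (R φ Z : ℝ) :
    HasDerivAt (fun r => f r φ Z)
      (fderiv ℝ (fun q : ℝ × ℝ × ℝ => f q.1 q.2.1 q.2.2) (R, φ, Z) (1, 0, 0)) R := by
  have hline : HasDerivAt (fun r : ℝ => ((r, φ, Z) : ℝ × ℝ × ℝ)) (1, 0, 0) R :=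
    (hasDerivAt_id R).prodMk ((hasDerivAt_const R φ).prodMk (hasDerivAt_const R Z))
  exact ((hf.differentiable (by simp)) (R, φ, Z)).hasFDerivAt.comp_hasDerivAt R hline

theorem Smooth3.hasDerivAt_dZ (hf : Smooth3 f) (R φ Z : ℝ) :
    HasDerivAt (fun z => f R φ z)
      (fderiv ℝ (fun q : ℝ × ℝ × ℝ => f q.1 q.2.1 q.2.2) (R, φ, Z) (0, 0, 1)) Z := by
  have hline : HasDerivAt (fun z : ℝ => ((R, φ, z) : ℝ × ℝ × ℝ)) (0, 0, 1) Z :=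
    (hasDerivAt_const Z R).prodMk ((hasDerivAt_const Z φ).prodMk (hasDerivAt_id Z))
  exact ((hf.differentiable (by simp)) (R, φ, Z)).hasFDerivAt.comp_hasDerivAt Z hline

theorem Smooth3.polDifferentiableAt (hf : Smooth3 f) (R φ Z : ℝ) : PolDifferentiableAt f R φ Z :=
  ⟨(hf.hasDerivAt_dR R φ Z).differentiableAt, (hf.hasDerivAt_dZ R φ Z).differentiableAt⟩

theorem smooth3_dR (hf : Smooth3 f) : Smooth3 (dR f) := by
  have hdR : (fun q : ℝ × ℝ × ℝ => dR f q.1 q.2.1 q.2.2)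
      = fun q => fderiv ℝ (fun q : ℝ × ℝ × ℝ => f q.1 q.2.1 q.2.2) q (1, 0, 0) :=
    funext fun q => (hf.hasDerivAt_dR q.1 q.2.1 q.2.2).deriv
  rw [Smooth3, hdR]
  exact (hf.fderiv_right (m := (⊤ : ℕ∞)) (mod_cast le_top)).clm_apply contDiff_const

theorem smooth3_dZ (hf : Smooth3 f) : Smooth3 (dZ f) := by
  have hdZ : (fun q : ℝ × ℝ × ℝ => dZ f q.1 q.2.1 q.2.2)
      = fun q => fderiv ℝ (fun q : ℝ × ℝ × ℝ => f q.1 q.2.1 q.2.2) q (0, 0, 1) :=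
    funext fun q => (hf.hasDerivAt_dZ q.1 q.2.1 q.2.2).deriv
  rw [Smooth3, hdZ]
  exact (hf.fderiv_right (m := (⊤ : ℕ∞)) (mod_cast le_top)).clm_apply contDiff_const

end Smooth

section MagneticField

variable {ψ : F3} {R φ Z : ℝ}

theorem polDifferentiableAt_BR (hψ : Smooth3 ψ) (hR : R ≠ 0) : PolDifferentiableAt (BR ψ) R φ Z :=
  ⟨((differentiableAt_const 1).div differentiableAt_id hR).mul
      ((smooth3_dZ hψ).polDifferentiableAt R φ Z).1,
    (differentiableAt_const _).mul ((smooth3_dZ hψ).polDifferentiableAt R φ Z).2⟩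

theorem polDifferentiableAt_BP (F0 : ℝ) (hR : R ≠ 0) : PolDifferentiableAt (BP F0) R φ Z :=
  ⟨(differentiableAt_const F0).div differentiableAt_id hR, differentiableAt_const _⟩

theorem polDifferentiableAt_BZ (hψ : Smooth3 ψ) (hR : R ≠ 0) : PolDifferentiableAt (BZ ψ) R φ Z :=
  ⟨((differentiableAt_const 1).div differentiableAt_id hR).neg.mul
      ((smooth3_dR hψ).polDifferentiableAt R φ Z).1,
    (differentiableAt_const _).mul ((smooth3_dR hψ).polDifferentiableAt R φ Z).2⟩

-- Holds also at `r = 0`, where both sides are `0` by the convention `x / 0 = 0`.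
theorem B2_eq_sq_add_sq_add_sq (F0 : ℝ) (ψ : F3) :
    B2 F0 ψ = fun r a z => BR ψ r a z ^ 2 + BP F0 r a z ^ 2 + BZ ψ r a z ^ 2 := by
  funext r a z
  simp only [B2, BR, BP, BZ]
  ring

end MagneticField

theorem B_dot_mixed_advection_pol_par_general (F0 : ℝ) (ψ u vpar ρ : F3)
    (hψ : Smooth3 ψ) (hv : Smooth3 vpar) :
    ∀ R φ Z : ℝ, 0 < R →
      BR ψ R φ Z * (ρ R φ Z
          * advVR (vR u) zeroF (vZ u) (XR ψ vpar) (XP F0 vpar) (XZ ψ vpar) R φ Z)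
        + BP F0 R φ Z * (ρ R φ Z
          * advVP (vR u) zeroF (vZ u) (XR ψ vpar) (XP F0 vpar) (XZ ψ vpar) R φ Z)
        + BZ ψ R φ Z * (ρ R φ Z
          * advVZ (vR u) zeroF (vZ u) (XR ψ vpar) (XP F0 vpar) (XZ ψ vpar) R φ Z)
      = R * ρ R φ Z * B2 F0 ψ R φ Z * pb u vpar R φ Z
        + R * ρ R φ Z * vpar R φ Z * pb u (fun r a z => B2 F0 ψ r a z / 2) R φ Z := by
  intro R φ Z hR
  have hvpar := hv.polDifferentiableAt R φ Z
  have hBR : PolDifferentiableAt (BR ψ) R φ Z := polDifferentiableAt_BR hψ hR.ne'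
  have hBP : PolDifferentiableAt (BP F0) R φ Z := polDifferentiableAt_BP F0 hR.ne'
  have hBZ : PolDifferentiableAt (BZ ψ) R φ Z := polDifferentiableAt_BZ hψ hR.ne'
  simp only [advVR, advVP, advVZ, advS_vR_zeroF_vZ]
  simp only [zeroF, zero_mul, zero_div, sub_zero, add_zero]
  unfold XR XP XZ
  rw [pb_mul_right hvpar hBR, pb_mul_right hvpar hBP, pb_mul_right hvpar hBZ]
  simp only [B2_eq_sq_add_sq_add_sq]
  rw [pb_half_sq_add_sq_add_sq hBR hBP hBZ]
  ring

/-- `B·(ρ (v_pol·∇(v∥B))) = Rρ|B|²[u,v∥] + Rρv∥[u,|B|²/2]`. -/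
theorem B_dot_mixed_advection_pol_par (F0 : ℝ) (ψ u vpar ρ : F3)
    (hψ : Smooth3 ψ) (hu : Smooth3 u) (hv : Smooth3 vpar) (hρ : Smooth3 ρ) :
    ∀ R φ Z : ℝ, 0 < R →
      BR ψ R φ Z * (ρ R φ Z
          * advVR (vR u) zeroF (vZ u) (XR ψ vpar) (XP F0 vpar) (XZ ψ vpar) R φ Z)
        + BP F0 R φ Z * (ρ R φ Z
          * advVP (vR u) zeroF (vZ u) (XR ψ vpar) (XP F0 vpar) (XZ ψ vpar) R φ Z)
        + BZ ψ R φ Z * (ρ R φ Z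
          * advVZ (vR u) zeroF (vZ u) (XR ψ vpar) (XP F0 vpar) (XZ ψ vpar) R φ Z)
      = R * ρ R φ Z * B2 F0 ψ R φ Z * pb u vpar R φ Z
        + R * ρ R φ Z * vpar R φ Z * pb u (fun r a z => B2 F0 ψ r a z / 2) R φ Z :=
  B_dot_mixed_advection_pol_par_general F0 ψ u vpar ρ hψ hv
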